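/- Let d, Nα, Nβ ≥ 1, N = Nα + Nβ, let X_1,…,X_N ⊆ ℝ^d be open sets, and let u_1,…,u_N with u_i : X_i → ℝ satisfy the splitting inequality for the cost c. Fix x_1⁰ ∈ X_1 and suppose that for k = 1, 2 the points (x_1⁰, x_{2k},…,x_{Nα k}, y_{1k},…,y_{Nβ k}) ∈ X_1×…×X_N attain equality in the splitting inequality. Write x_{11} = x_{12} = x_1⁰. Then for every s ∈ {1,…,Nβ}: (i) Σ_{i=1}^{Nα} (x_{i2} − x_{i1}) · Σ_{j≠s} (y_{j2}* − y_{j1}*) ≤ 0, and (ii) Σ_{i=1}^{Nα} (x_{i2} − x_{i1}) · (y_{s2}* − y_{s1}*) ≤ 0. -/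

import Mathlib

open MeasureTheory RealInnerProductSpace

noncomputable section

/-- The "starred" vector `y* = (-2 y¹, y², …, y^d)`. -/
def ystar {d : ℕ} (hd : 0 < d) (y : EuclideanSpace ℝ (Fin d)) : EuclideanSpace ℝ (Fin d) :=
  y - (3 * y ⟨0, hd⟩) • EuclideanSpace.single (⟨0, hd⟩ : Fin d) (1 : ℝ)

/-- The cost `c(x_1,…,x_Nα,y_1,…,y_Nβ) = ∑_i ∑_j x_i · y_j*`, in block coordinates. -/
def costxy {d Nα Nβ : ℕ} (hd : 0 < d)
    (x : Fin Nα → EuclideanSpace ℝ (Fin d)) (y : Fin Nβ → EuclideanSpace ℝ (Fin d)) : ℝ :=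
  ∑ i : Fin Nα, ∑ j : Fin Nβ, ⟪x i, ystar hd (y j)⟫

/-!
The cost depends on a configuration only through `⟪∑ i, x i, ∑ j, (y j)*⟫`. Exchanging the
`s`-th `y`-coordinates of two configurations that attain equality gives two admissible
configurations; adding the splitting inequality at these and subtracting the two equalities
leaves exactly `⟪∑ i, (x2 i - x1 i), (y2 s)* - (y1 s)*⟫ ≤ 0`, which is (ii). Summing (ii) over
`j ≠ s` gives (i).
-/

theorem sum_apply_update {ι α M : Type*} [Fintype ι] [DecidableEq ι] [AddCommGroup M]
    (f : ι → α → M) (g : ι → α) (s : ι) (v : α) :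
    ∑ j, f j (Function.update g s v j) = ∑ j, f j (g j) + (f s v - f s (g s)) := by
  rw [← Finset.add_sum_erase _ _ (Finset.mem_univ s),
    ← Finset.add_sum_erase _ _ (Finset.mem_univ s), Function.update_self,
    Finset.sum_congr rfl fun j hj => by rw [Function.update_of_ne (Finset.ne_of_mem_erase hj)]]
  abel

section

variable {d Nα Nβ : ℕ} (hd : 0 < d)

theorem costxy_eq_inner_sum (x : Fin Nα → EuclideanSpace ℝ (Fin d))
    (y : Fin Nβ → EuclideanSpace ℝ (Fin d)) :
    costxy hd x y = ⟪∑ i, x i, ∑ j, (ystar hd (y j))⟫ := by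
  rw [costxy, sum_inner]
  simp only [inner_sum]

theorem costxy_update (x : Fin Nα → EuclideanSpace ℝ (Fin d))
    (y : Fin Nβ → EuclideanSpace ℝ (Fin d)) (s : Fin Nβ) (v : EuclideanSpace ℝ (Fin d)) :
    costxy hd x (Function.update y s v) =
      costxy hd x y + ⟪∑ i, x i, ystar hd v - ystar hd (y s)⟫ := by
  rw [costxy_eq_inner_sum, costxy_eq_inner_sum,
    sum_apply_update (fun _ => ystar hd), inner_add_right]

theorem inner_sum_sub_ystar_sub_nonpos
    {Xa : Fin Nα → Set (EuclideanSpace ℝ (Fin d))} {Xb : Fin Nβ → Set (EuclideanSpace ℝ (Fin d))}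
    {ua : Fin Nα → EuclideanSpace ℝ (Fin d) → ℝ} {ub : Fin Nβ → EuclideanSpace ℝ (Fin d) → ℝ}
    (hsplit : ∀ (x : Fin Nα → EuclideanSpace ℝ (Fin d))
        (y : Fin Nβ → EuclideanSpace ℝ (Fin d)),
        (∀ i, x i ∈ Xa i) → (∀ j, y j ∈ Xb j) →
        ∑ i, ua i (x i) + ∑ j, ub j (y j) ≤ costxy hd x y)
    {x1 x2 : Fin Nα → EuclideanSpace ℝ (Fin d)} {y1 y2 : Fin Nβ → EuclideanSpace ℝ (Fin d)}
    (hx1 : ∀ i, x1 i ∈ Xa i) (hx2 : ∀ i, x2 i ∈ Xa i)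
    (hy1 : ∀ j, y1 j ∈ Xb j) (hy2 : ∀ j, y2 j ∈ Xb j)
    (heq1 : ∑ i, ua i (x1 i) + ∑ j, ub j (y1 j) = costxy hd x1 y1)
    (heq2 : ∑ i, ua i (x2 i) + ∑ j, ub j (y2 j) = costxy hd x2 y2) (s : Fin Nβ) :
    ⟪∑ i, (x2 i - x1 i), ystar hd (y2 s) - ystar hd (y1 s)⟫ ≤ 0 := by
  have hmem {y : Fin Nβ → EuclideanSpace ℝ (Fin d)} (hy : ∀ j, y j ∈ Xb j) {v}
      (hv : v ∈ Xb s) : ∀ j, Function.update y s v j ∈ Xb j :=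
    (Function.forall_update_iff y fun j w => w ∈ Xb j).2 ⟨hv, fun j _ => hy j⟩
  have h12 := hsplit x1 _ hx1 (hmem hy1 (hy2 s))
  have h21 := hsplit x2 _ hx2 (hmem hy2 (hy1 s))
  rw [sum_apply_update, costxy_update, inner_sub_right] at h12 h21
  rw [Finset.sum_sub_distrib, inner_sub_left, inner_sub_right, inner_sub_right]
  linarith

end

theorem stmt_9_general {d Nα Nβ : ℕ} (hd : 0 < d)
    (Xa : Fin Nα → Set (EuclideanSpace ℝ (Fin d)))
    (Xb : Fin Nβ → Set (EuclideanSpace ℝ (Fin d)))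
    (ua : Fin Nα → EuclideanSpace ℝ (Fin d) → ℝ)
    (ub : Fin Nβ → EuclideanSpace ℝ (Fin d) → ℝ)
    (hsplit : ∀ (x : Fin Nα → EuclideanSpace ℝ (Fin d))
        (y : Fin Nβ → EuclideanSpace ℝ (Fin d)),
        (∀ i, x i ∈ Xa i) → (∀ j, y j ∈ Xb j) →
        ∑ i, ua i (x i) + ∑ j, ub j (y j) ≤ costxy hd x y)
    (x1 x2 : Fin Nα → EuclideanSpace ℝ (Fin d))
    (y1 y2 : Fin Nβ → EuclideanSpace ℝ (Fin d))
    (hx1 : ∀ i, x1 i ∈ Xa i) (hx2 : ∀ i, x2 i ∈ Xa i)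
    (hy1 : ∀ j, y1 j ∈ Xb j) (hy2 : ∀ j, y2 j ∈ Xb j)
    (heq1 : ∑ i, ua i (x1 i) + ∑ j, ub j (y1 j) = costxy hd x1 y1)
    (heq2 : ∑ i, ua i (x2 i) + ∑ j, ub j (y2 j) = costxy hd x2 y2) :
    ∀ s : Fin Nβ,
      ⟪∑ i, (x2 i - x1 i),
          ∑ j ∈ Finset.univ.erase s, (ystar hd (y2 j) - ystar hd (y1 j))⟫ ≤ 0 ∧
      ⟪∑ i, (x2 i - x1 i), ystar hd (y2 s) - ystar hd (y1 s)⟫ ≤ 0 := by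
  have hswap := inner_sum_sub_ystar_sub_nonpos hd hsplit hx1 hx2 hy1 hy2 heq1 heq2
  refine fun s => ⟨?_, hswap s⟩
  rw [inner_sum]
  exact Finset.sum_nonpos fun j _ => hswap j

theorem stmt_9 {d Nα Nβ : ℕ} (hd : 0 < d) (hNα : 0 < Nα) (hNβ : 0 < Nβ)
    (Xa : Fin Nα → Set (EuclideanSpace ℝ (Fin d)))
    (Xb : Fin Nβ → Set (EuclideanSpace ℝ (Fin d)))
    (hXa : ∀ i, IsOpen (Xa i)) (hXb : ∀ j, IsOpen (Xb j))
    (ua : Fin Nα → EuclideanSpace ℝ (Fin d) → ℝ)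
    (ub : Fin Nβ → EuclideanSpace ℝ (Fin d) → ℝ)
    (hsplit : ∀ (x : Fin Nα → EuclideanSpace ℝ (Fin d))
        (y : Fin Nβ → EuclideanSpace ℝ (Fin d)),
        (∀ i, x i ∈ Xa i) → (∀ j, y j ∈ Xb j) →
        ∑ i, ua i (x i) + ∑ j, ub j (y j) ≤ costxy hd x y)
    (x1 x2 : Fin Nα → EuclideanSpace ℝ (Fin d))
    (y1 y2 : Fin Nβ → EuclideanSpace ℝ (Fin d))
    (hx1 : ∀ i, x1 i ∈ Xa i) (hx2 : ∀ i, x2 i ∈ Xa i)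
    (hy1 : ∀ j, y1 j ∈ Xb j) (hy2 : ∀ j, y2 j ∈ Xb j)
    (hx0 : x1 ⟨0, hNα⟩ = x2 ⟨0, hNα⟩)
    (heq1 : ∑ i, ua i (x1 i) + ∑ j, ub j (y1 j) = costxy hd x1 y1)
    (heq2 : ∑ i, ua i (x2 i) + ∑ j, ub j (y2 j) = costxy hd x2 y2) :
    ∀ s : Fin Nβ,
      ⟪∑ i, (x2 i - x1 i),
          ∑ j ∈ Finset.univ.erase s, (ystar hd (y2 j) - ystar hd (y1 j))⟫ ≤ 0 ∧
      ⟪∑ i, (x2 i - x1 i), ystar hd (y2 s) - ystar hd (y1 s)⟫ ≤ 0 :=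
  stmt_9_general hd Xa Xb ua ub hsplit x1 x2 y1 y2 hx1 hx2 hy1 hy2 heq1 heq2
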